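/- Let G be a finite connected graph, let v be a vertex with neighbor set A, and let w be a vertex with graph distance d(w,v) = 2. Let μ_w denote the distribution of the simple random walk started at w after 3 steps, and let P denote the probability that the simple random walk started at w is at v after exactly 2 steps. Then the exact identity H_{wv} = 3 + Σ_{a∈V} μ_w(a) H_{av} + P · (−1 − (1/|A|) Σ_{a∈A} H_{av}) holds; moreover the correction factor equals −1 − (1/|A|) Σ_{a∈A} H_{av} = −2|E|/deg(v). -/

import Mathlib

open MeasureTheory Filter Matrix

noncomputable section

/-- The simple graph on `Fin n` determined by a Boolean labelling of unordered pairs of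
vertices: `u` and `w` are adjacent iff `u ≠ w` and the pair `{u, w}` is labelled `true`. -/
def graphOf (n : ℕ) (ω : Sym2 (Fin n) → Bool) : SimpleGraph (Fin n) where
  Adj u w := u ≠ w ∧ ω s(u, w) = true
  symm := by
    constructor
    intro u w h
    refine ⟨h.1.symm, ?_⟩
    rw [Sym2.eq_swap]
    exact h.2
  loopless := by
    constructor
    intro u h
    exact h.1 rfl

instance (n : ℕ) (ω : Sym2 (Fin n) → Bool) : DecidableRel (graphOf n ω).Adj :=
  fun _ _ => instDecidableAnd

/-- Transition matrix of the simple random walk on a finite graph: from `u`, move to a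
uniformly random neighbor of `u`. -/
def transM {V : Type*} [Fintype V] [DecidableEq V] (G : SimpleGraph V) [DecidableRel G.Adj] :
    Matrix V V ℝ :=
  Matrix.of fun u w => if G.Adj u w then ((G.degree u : ℝ))⁻¹ else 0

/-- Transition matrix with all transitions into `v` removed (the walk killed at `v`). -/
def killedM {V : Type*} [Fintype V] [DecidableEq V] (G : SimpleGraph V) [DecidableRel G.Adj]
    (v : V) : Matrix V V ℝ :=
  Matrix.of fun u w => if w = v then 0 else transM G u w

/-- Expected hitting time `H_{wv}` of `v` for the simple random walk started at `w`,
defined via `H_{wv} = Σ_{t ≥ 0} P(T > t)` where `T` is the first hitting time of `v`;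
the survival probability `P(T > t)` equals `((killedM G v)^t 𝟙)_w`.  By convention
`H_{vv} = 0`. -/
def hit {V : Type*} [Fintype V] [DecidableEq V] (G : SimpleGraph V) [DecidableRel G.Adj]
    (w v : V) : ℝ :=
  if w = v then 0 else ∑' t : ℕ, ((killedM G v ^ t) *ᵥ fun _ => (1 : ℝ)) w

/-- The stationary distribution `π(w) = deg(w) / (2|E|)` of the simple random walk. -/
def statDist {V : Type*} [Fintype V] [DecidableEq V] (G : SimpleGraph V) [DecidableRel G.Adj]
    (w : V) : ℝ :=
  (G.degree w : ℝ) / (2 * (G.edgeFinset.card : ℝ))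

/-- The Erdős–Rényi measure `G(n,p)`: each unordered pair of vertices is (independently)
labelled `true` with probability `p`. -/
def erMeasure (n : ℕ) (p : ℝ) (hp : p ≤ 1) : Measure (Sym2 (Fin n) → Bool) :=
  Measure.pi fun _ =>
    (PMF.bernoulli (Real.toNNReal p) (by simpa using hp)).toMeasure

end

/-!
The hitting time `H_{uv}` is the sum over `t` of the survival probabilities of the walk killed
at `v`. Since `v` can be reached from everywhere within a bounded number of steps, these decay
geometrically, so `H` is finite and satisfies the first-step equations `H = 1 + P H` off `v`.
With `R = 1 + (P H)(v)` the expected return time, this reads `H + R δ_v = 1 + P H`. Pairing it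
with the stationary measure `deg` (`deg P = deg`) gives Kac's formula `deg(v) R = 2|E|`;
applying `P^n` gives `P^n H + R P^n(·, v) = 1 + P^(n+1) H`, and the cases `n = 0, 1, 2` at `w`
telescope to the identity, with `P^0(w, v) = P(w, v) = 0` because `d(w, v) = 2`.
-/

open Finset

lemma summable_of_le_pow_div {f : ℕ → ℝ} {c : ℝ} {N : ℕ} (hN : 0 < N) (hc0 : 0 ≤ c)
    (hc1 : c < 1) (hf0 : ∀ t, 0 ≤ f t) (hf : ∀ t, f t ≤ c ^ (t / N)) : Summable f := by
  have : NeZero N := ⟨hN.ne'⟩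
  rw [← (Nat.divModEquiv N).symm.summable_iff]
  refine Summable.of_nonneg_of_le (fun _ => hf0 _) (fun p => ?_)
    ((summable_geometric_of_lt_one hc0 hc1).mul_of_nonneg (Summable.of_finite :
      Summable fun _ : Fin N => (1 : ℝ)) (fun m => pow_nonneg hc0 m)
      (fun _ => zero_le_one))
  have hdiv : (p.1 * N + p.2) / N = p.1 := by
    rw [Nat.add_comm, Nat.add_mul_div_right _ _ hN, Nat.div_eq_of_lt p.2.is_lt, Nat.zero_add]
  simpa [hdiv] using hf (p.1 * N + p.2)

lemma sum_mul_lt_one {ι : Type*} [Fintype ι] {p f : ι → ℝ} (hp : ∀ i, 0 ≤ p i)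
    (hp1 : ∑ i, p i = 1) (hf : ∀ i, f i ≤ 1) {j : ι} (hpj : 0 < p j) (hfj : f j < 1) :
    ∑ i, p i * f i < 1 :=
  hp1 ▸ sum_lt_sum (fun i _ => mul_le_of_le_one_right (hp i) (hf i))
    ⟨j, mem_univ j, by simpa using mul_lt_mul_of_pos_left hfj hpj⟩

section RandomWalk

variable {V : Type*} [Fintype V] [DecidableEq V] {G : SimpleGraph V} [DecidableRel G.Adj]

lemma transM_nonneg (u a : V) : 0 ≤ transM G u a := by
  simp only [transM, of_apply]
  split_ifs <;> positivity

lemma transM_pos {u a : V} (h : G.Adj u a) : 0 < transM G u a := by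
  simp [transM, h, h.degree_pos_left]

lemma transM_mulVec_apply (f : V → ℝ) (u : V) :
    (transM G *ᵥ f) u = (G.degree u : ℝ)⁻¹ * ∑ a ∈ G.neighborFinset u, f a := by
  simp [transM, mulVec, dotProduct, ite_mul, ← sum_filter, Finset.mul_sum,
    SimpleGraph.neighborFinset_eq_filter]

lemma sum_transM_eq (u : V) : ∑ a, transM G u a = (G.degree u : ℝ)⁻¹ * G.degree u := by
  simpa [mulVec, dotProduct] using transM_mulVec_apply (G := G) 1 u

lemma sum_transM_le_one (u : V) : ∑ a, transM G u a ≤ 1 := by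
  rw [sum_transM_eq]
  exact inv_mul_le_one

lemma sum_transM (u : V) (hu : 0 < G.degree u) : ∑ a, transM G u a = 1 := by
  rw [sum_transM_eq, inv_mul_cancel₀ (by exact_mod_cast hu.ne')]

lemma transM_pow_mulVec_one (hdeg : ∀ u, 0 < G.degree u) (n : ℕ) :
    transM G ^ n *ᵥ 1 = 1 := by
  induction n with
  | zero => simp
  | succ n ih =>
    funext u
    rw [pow_succ', ← mulVec_mulVec, ih]
    simpa [mulVec, dotProduct] using sum_transM u (hdeg u)

lemma degree_vecMul_transM :
    (fun u => (G.degree u : ℝ)) ᵥ* transM G = fun a => (G.degree a : ℝ) := by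
  funext a
  have h (u : V) : (G.degree u : ℝ) * transM G u a = if G.Adj a u then 1 else 0 := by
    by_cases hua : G.Adj u a
    · simp [transM, hua, hua.symm, hua.degree_pos_left.ne']
    · simp [transM, hua, G.adj_comm a u]
  simp [vecMul, dotProduct, h, ← SimpleGraph.neighborFinset_eq_filter]

section Survival

variable (G) in
noncomputable def survival (v : V) (t : ℕ) (u : V) : ℝ := (killedM G v ^ t *ᵥ fun _ => 1) u

variable {v : V}

lemma killedM_apply (u a : V) : killedM G v u a = if a = v then 0 else transM G u a := rfl

lemma killedM_pow_nonneg (t : ℕ) (u a : V) : 0 ≤ (killedM G v ^ t) u a := by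
  induction t generalizing u with
  | zero => by_cases h : u = a <;> simp [one_apply, h]
  | succ t ih =>
    rw [pow_succ', mul_apply]
    refine sum_nonneg fun b _ => mul_nonneg ?_ (ih b)
    rw [killedM_apply]
    split_ifs
    exacts [le_rfl, transM_nonneg u b]

lemma survival_zero (u : V) : survival G v 0 u = 1 := by
  simp [survival]

lemma survival_eq_sum (t : ℕ) (u : V) : survival G v t u = ∑ a, (killedM G v ^ t) u a := by
  simp [survival, mulVec, dotProduct]

lemma survival_add (s t : ℕ) (u : V) :
    survival G v (s + t) u = ∑ a, (killedM G v ^ s) u a * survival G v t a := by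
  simp only [survival, pow_add, ← mulVec_mulVec]
  rfl

lemma survival_succ (t : ℕ) (u : V) :
    survival G v (t + 1) u = ∑ a, transM G u a * if a = v then 0 else survival G v t a := by
  rw [add_comm, survival_add]
  refine sum_congr rfl fun a _ => ?_
  simp only [pow_one, killedM_apply]
  split_ifs <;> simp

lemma survival_nonneg (t : ℕ) (u : V) : 0 ≤ survival G v t u := by
  rw [survival_eq_sum]
  exact sum_nonneg fun a _ => killedM_pow_nonneg t u a

lemma survival_add_le {s t : ℕ} {c : ℝ} (hc : ∀ a, survival G v t a ≤ c) (u : V) :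
    survival G v (s + t) u ≤ survival G v s u * c := by
  rw [survival_add, survival_eq_sum, sum_mul]
  exact sum_le_sum fun a _ => mul_le_mul_of_nonneg_left (hc a) (killedM_pow_nonneg s u a)

lemma survival_one_le_one (u : V) : survival G v 1 u ≤ 1 := by
  rw [survival_succ]
  refine (sum_le_sum fun a _ => ?_).trans (sum_transM_le_one (G := G) u)
  refine mul_le_of_le_one_right (transM_nonneg u a) ?_
  split_ifs <;> simp [survival_zero]

lemma survival_antitone (u : V) : Antitone fun t => survival G v t u :=
  antitone_nat_of_succ_le fun t => by
    simpa using survival_add_le (s := t) (survival_one_le_one (G := G) (v := v)) u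

lemma survival_le_one (t : ℕ) (u : V) : survival G v t u ≤ 1 :=
  (survival_antitone u (Nat.zero_le t)).trans_eq (survival_zero u)

lemma survival_succ_lt_one {t : ℕ} {u a : V} (h : G.Adj u a)
    (ha : a = v ∨ survival G v t a < 1) : survival G v (t + 1) u < 1 := by
  rw [survival_succ]
  refine sum_mul_lt_one (transM_nonneg u) (sum_transM u h.degree_pos_left)
    (fun b => ?_) (transM_pos h) (j := a) ?_
  · split_ifs
    exacts [zero_le_one, survival_le_one t b]
  · split_ifs with hav
    exacts [zero_lt_one, ha.resolve_left hav]

lemma survival_lt_one_of_walk {u : V} (p : G.Walk u v) (hu : u ≠ v) {t : ℕ}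
    (ht : p.length ≤ t) : survival G v t u < 1 := by
  induction p generalizing t with
  | nil => exact absurd rfl hu
  | @cons _ b _ hadj q ih =>
    obtain ⟨s, rfl⟩ : ∃ s, t = s + 1 := Nat.exists_eq_add_one.mpr (by simp at ht; omega)
    exact survival_succ_lt_one hadj
      ((eq_or_ne _ _).imp id fun hb => ih hb (by simp at ht; omega))

lemma exists_survival_lt_one [Nontrivial V] (hG : G.Connected) :
    ∃ N, ∀ u, survival G v N u < 1 := by
  obtain ⟨D, hD⟩ : ∃ D, ∀ x, G.dist x v ≤ D :=
    ⟨univ.sup fun x => G.dist x v, fun x => le_sup (f := fun x => G.dist x v) (mem_univ x)⟩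
  refine ⟨D + 1, fun u => ?_⟩
  by_cases hu : u = v
  · obtain ⟨a, hva⟩ :=
      (G.degree_pos_iff_exists_adj v).mp (hG.preconnected.degree_pos_of_nontrivial v)
    obtain ⟨p, hp⟩ := hG.exists_walk_length_eq_dist a v
    subst hu
    exact survival_succ_lt_one hva (Or.inr (survival_lt_one_of_walk p hva.ne.symm (hp ▸ hD a)))
  · obtain ⟨p, hp⟩ := hG.exists_walk_length_eq_dist u v
    exact survival_lt_one_of_walk p hu (by rw [hp]; exact (hD u).trans D.le_succ)

lemma survival_le_pow {N : ℕ} {c : ℝ} (hc : ∀ u, survival G v N u ≤ c) (m : ℕ) (u : V) :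
    survival G v (m * N) u ≤ c ^ m := by
  induction m generalizing u with
  | zero => simp [survival_zero]
  | succ m ih =>
    calc survival G v ((m + 1) * N) u ≤ survival G v (m * N) u * c := by
          rw [add_mul, one_mul]; exact survival_add_le hc u
      _ ≤ c ^ m * c :=
          mul_le_mul_of_nonneg_right (ih u) ((survival_nonneg N u).trans (hc u))
      _ = c ^ (m + 1) := (pow_succ c m).symm

lemma summable_survival [Nontrivial V] (hG : G.Connected) (u : V) :
    Summable fun t => survival G v t u := by
  obtain ⟨N, hN⟩ := exists_survival_lt_one (v := v) hG
  obtain ⟨x, hx⟩ := Finite.exists_max (survival G v N)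
  have hN0 : 0 < N := Nat.pos_of_ne_zero fun h => by simpa [h, survival_zero] using hN x
  refine summable_of_le_pow_div hN0 (survival_nonneg N x) (hN x) (fun t => survival_nonneg t u)
    fun t => ?_
  exact (survival_antitone u (Nat.div_mul_le_self t N)).trans (survival_le_pow hx _ u)

end Survival

section HittingTime

variable [Nontrivial V]

lemma hit_eq_one_add_sum (hG : G.Connected) {u v : V} (hu : u ≠ v) :
    hit G u v = 1 + ∑ a, transM G u a * hit G a v := by
  have hsum (a : V) : Summable fun t => if a = v then (0 : ℝ) else survival G v t a := by
    split_ifs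
    exacts [summable_zero, summable_survival hG a]
  have htsum (a : V) : ∑' t, (if a = v then (0 : ℝ) else survival G v t a) = hit G a v := by
    unfold hit
    split_ifs <;> simp [survival]
  calc hit G u v = ∑' t, survival G v t u := if_neg hu
    _ = 1 + ∑' t, ∑ a, transM G u a * if a = v then 0 else survival G v t a := by
        rw [(summable_survival hG u).tsum_eq_zero_add, survival_zero]
        simp_rw [survival_succ]
    _ = 1 + ∑ a, transM G u a * hit G a v := by
        rw [Summable.tsum_finsetSum fun a _ => (hsum a).mul_left _]
        simp_rw [tsum_mul_left, htsum]

variable (v : V)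

variable (G) in
noncomputable def returnTime : ℝ := 1 + (transM G *ᵥ fun a => hit G a v) v

lemma hit_add_single (hG : G.Connected) :
    (fun u => hit G u v) + Pi.single v (returnTime G v) = 1 + transM G *ᵥ fun u => hit G u v := by
  funext u
  by_cases hu : u = v
  · subst hu
    simp [hit, returnTime, mulVec, dotProduct]
  · simp [hu, hit_eq_one_add_sum hG hu, mulVec, dotProduct]

lemma degree_mul_returnTime (hG : G.Connected) :
    G.degree v * returnTime G v = 2 * #G.edgeFinset := by
  have h := congrArg ((fun u => (G.degree u : ℝ)) ⬝ᵥ ·) (hit_add_single v hG)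
  simp only [dotProduct_add, dotProduct_single, dotProduct_one, dotProduct_mulVec,
    degree_vecMul_transM] at h
  rw [← Nat.cast_sum, G.sum_degrees_eq_twice_card_edges] at h
  push_cast at h
  linarith

lemma transM_pow_mulVec_hit (hG : G.Connected) (n : ℕ) (u : V) :
    (transM G ^ n *ᵥ fun x => hit G x v) u + returnTime G v * (transM G ^ n) u v =
      1 + (transM G ^ (n + 1) *ᵥ fun x => hit G x v) u := by
  have h := congrArg (fun x => (transM G ^ n *ᵥ x) u) (hit_add_single v hG)
  simpa [mulVec_add, mulVec_mulVec, ← pow_succ,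
    transM_pow_mulVec_one fun x => hG.preconnected.degree_pos_of_nontrivial x] using h

end HittingTime

end RandomWalk

/-- Let `G` be a finite connected graph, `v` a vertex with neighbor set `A`, and `w` a
vertex at graph distance `2` from `v`.  With `μ_w` the distribution of the simple random
walk started at `w` after `3` steps and `P` the probability that the walk started at `w`
is at `v` after exactly `2` steps, the exact identity
`H_{wv} = 3 + Σ_a μ_w(a) H_{av} + P·(−1 − (1/|A|) Σ_{a∈A} H_{av})` holds; moreover the
correction factor equals `−1 − (1/|A|) Σ_{a∈A} H_{av} = −2|E|/deg(v)`. -/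
theorem statement14 {V : Type*} [Fintype V] [DecidableEq V] (G : SimpleGraph V)
    [DecidableRel G.Adj] (hG : G.Connected) (v w : V) (hd : G.dist w v = 2) :
    hit G w v = 3 + (∑ a : V, (transM G ^ 3) w a * hit G a v) +
        (transM G ^ 2) w v *
          (-1 - (1 / ((G.neighborFinset v).card : ℝ)) * ∑ a ∈ G.neighborFinset v, hit G a v) ∧
      -1 - (1 / ((G.neighborFinset v).card : ℝ)) * (∑ a ∈ G.neighborFinset v, hit G a v) =
        -(2 * (G.edgeFinset.card : ℝ) / (G.degree v : ℝ)) := by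
  have hwv : w ≠ v := by
    rintro rfl
    simp at hd
  have : Nontrivial V := ⟨⟨w, v, hwv⟩⟩
  have hnadj : ¬G.Adj w v := fun h => by simp [G.dist_eq_one_iff_adj.mpr h] at hd
  have hfactor : -1 - (1 / ((G.neighborFinset v).card : ℝ)) *
      (∑ a ∈ G.neighborFinset v, hit G a v) = -returnTime G v := by
    have h := transM_mulVec_apply (G := G) (fun a => hit G a v) v
    rw [SimpleGraph.card_neighborFinset_eq_degree, one_div, ← h, returnTime]
    ring
  have h0 := transM_pow_mulVec_hit v hG 0 w
  have h1 := transM_pow_mulVec_hit v hG 1 w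
  have h2 := transM_pow_mulVec_hit v hG 2 w
  have hPwv : transM G w v = 0 := by simp [transM, hnadj]
  simp only [pow_zero, one_mulVec, one_apply_ne hwv, pow_one, hPwv, mul_zero, add_zero,
    Nat.reduceAdd] at h0 h1 h2
  refine ⟨?_, ?_⟩
  · rw [hfactor]
    change _ = 3 + (transM G ^ 3 *ᵥ fun a => hit G a v) w + _
    linarith
  · rw [hfactor, ← degree_mul_returnTime v hG, mul_div_cancel_left₀]
    exact_mod_cast (hG.preconnected.degree_pos_of_nontrivial v).ne'
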